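/- arXiv:1711.08483 — 2 statements merged into one kernel-verified Lean document; each statement's English description precedes it below -/
import Mathlib

section
/- If a finite group G admits a ramification structure of size (3,3) (i.e., G is a Beauville group), then G admits a ramification structure of size (r₁, r₂) for every r₁, r₂ ≥ 3. -/
/-- A spherical system of generators: a tuple (list) of nontrivial elements
generating `G` whose product is `1`. -/
def IsSpherical {G : Type*} [Group G] (T : List G) : Prop :=
  (∀ g ∈ T, g ≠ 1) ∧ Subgroup.closure {g : G | g ∈ T} = ⊤ ∧ T.prod = 1

/-- `Σ(T)`: the union of all conjugates of the cyclic subgroups generated by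
the entries of `T`. -/
def SigmaSet {G : Type*} [Group G] (T : List G) : Set G :=
  {x : G | ∃ t ∈ T, ∃ c : G, ∃ k : ℤ, x = c * t ^ k * c⁻¹}

/-- An (unmixed) ramification structure: a pair of spherical systems of
generators which are disjoint, i.e. `Σ(T₁) ∩ Σ(T₂) = {1}`. -/
def IsRamificationStructure {G : Type*} [Group G] (T₁ T₂ : List G) : Prop :=
  IsSpherical T₁ ∧ IsSpherical T₂ ∧ SigmaSet T₁ ∩ SigmaSet T₂ = {1}

/-!
Entries of a spherical system can be replaced by powers of its entries without enlarging `Σ`,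
so it suffices to lengthen each spherical triple `[a, b, c]` using only powers of its entries.
Appending cancelling pairs `a, a⁻¹` raises the length by two and keeps the product `1`;
this reaches every odd length from `[a, b, c]` and every even length from `[a, a⁻¹, b, b⁻¹]`,
which still generates `G` because `c = (a * b)⁻¹`.
-/

open Subgroup

section

variable {G : Type*} [Group G]

theorem sigmaSet_subset_of_forall_mem_zpowers {T S : List G}
    (h : ∀ g ∈ T, ∃ s ∈ S, g ∈ zpowers s) : SigmaSet T ⊆ SigmaSet S := by
  rintro x ⟨t, ht, c, k, rfl⟩
  obtain ⟨s, hs, hts⟩ := h t ht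
  obtain ⟨m, rfl⟩ := mem_zpowers_iff.mp hts
  exact ⟨s, hs, c, m * k, by rw [zpow_mul]⟩

theorem one_mem_sigmaSet {T : List G} (hT : T ≠ []) : (1 : G) ∈ SigmaSet T := by
  obtain ⟨t, ht⟩ := List.exists_mem_of_ne_nil T hT
  exact ⟨t, ht, 1, 0, by simp⟩

theorem IsRamificationStructure.of_forall_mem_zpowers {T₁ T₂ S₁ S₂ : List G}
    (hT : IsRamificationStructure T₁ T₂) (hS₁ : IsSpherical S₁) (hS₂ : IsSpherical S₂)
    (hne₁ : S₁ ≠ []) (hne₂ : S₂ ≠ [])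
    (h₁ : ∀ g ∈ S₁, ∃ t ∈ T₁, g ∈ zpowers t) (h₂ : ∀ g ∈ S₂, ∃ t ∈ T₂, g ∈ zpowers t) :
    IsRamificationStructure S₁ S₂ := by
  refine ⟨hS₁, hS₂, Set.Subset.antisymm ?_ ?_⟩
  · rw [← hT.2.2]
    exact Set.inter_subset_inter (sigmaSet_subset_of_forall_mem_zpowers h₁)
      (sigmaSet_subset_of_forall_mem_zpowers h₂)
  · simpa using ⟨one_mem_sigmaSet hne₁, one_mem_sigmaSet hne₂⟩

def cancellingPairs (a : G) (n : ℕ) : List G := (List.replicate n [a, a⁻¹]).flatten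

@[simp]
theorem length_cancellingPairs (a : G) (n : ℕ) : (cancellingPairs a n).length = 2 * n := by
  simp [cancellingPairs, mul_comm]

@[simp]
theorem prod_cancellingPairs (a : G) (n : ℕ) : (cancellingPairs a n).prod = 1 := by
  simp [cancellingPairs, List.prod_flatten]

theorem eq_or_eq_inv_of_mem_cancellingPairs {a g : G} {n : ℕ} (hg : g ∈ cancellingPairs a n) :
    g = a ∨ g = a⁻¹ := by
  simp only [cancellingPairs, List.mem_flatten, List.mem_replicate] at hg
  obtain ⟨l, ⟨-, rfl⟩, hgl⟩ := hg
  simpa using hgl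

theorem IsSpherical.append_cancellingPairs {T : List G} (hT : IsSpherical T) {a : G}
    (ha : a ≠ 1) (n : ℕ) : IsSpherical (T ++ cancellingPairs a n) := by
  obtain ⟨hne, hgen, hprod⟩ := hT
  refine ⟨?_, ?_, by simp [hprod]⟩
  · intro g hg
    rcases List.mem_append.mp hg with hg | hg
    · exact hne g hg
    · rcases eq_or_eq_inv_of_mem_cancellingPairs hg with rfl | rfl
      · exact ha
      · exact inv_ne_one.mpr ha
  · rw [eq_top_iff, ← hgen]
    exact closure_mono fun g hg => List.mem_append_left _ hg

theorem IsSpherical.quadruple_of_triple {a b c : G} (h : IsSpherical [a, b, c]) :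
    IsSpherical [a, a⁻¹, b, b⁻¹] := by
  obtain ⟨hne, hgen, hprod⟩ := h
  have ha : a ≠ 1 := hne a (by simp)
  have hb : b ≠ 1 := hne b (by simp)
  have hc : c = (a * b)⁻¹ := eq_inv_of_mul_eq_one_right (by simpa [mul_assoc] using hprod)
  refine ⟨by simp [ha, hb], ?_, by simp⟩
  set H := closure {g : G | g ∈ [a, a⁻¹, b, b⁻¹]}
  have haH : a ∈ H := subset_closure (by simp)
  have hbH : b ∈ H := subset_closure (by simp)
  rw [eq_top_iff, ← hgen, closure_le]
  simp only [List.mem_cons, List.not_mem_nil, or_false, Set.ofPred_or, Set.ofPred_eq_eq_singleton,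
    Set.union_subset_iff, Set.singleton_subset_iff]
  exact ⟨haH, hbH, hc ▸ inv_mem (mul_mem haH hbH)⟩

theorem IsSpherical.exists_length_of_triple {a b c : G} (h : IsSpherical [a, b, c]) {r : ℕ}
    (hr : 3 ≤ r) :
    ∃ S : List G, S.length = r ∧ IsSpherical S ∧ ∀ g ∈ S, ∃ t ∈ [a, b, c], g ∈ zpowers t := by
  have ha : a ≠ 1 := h.1 a (by simp)
  have hpow : ∀ g ∈ [a, a⁻¹, b, b⁻¹, c], ∃ t ∈ [a, b, c], g ∈ zpowers t := by
    simp only [List.forall_mem_cons, List.not_mem_nil, IsEmpty.forall_iff, implies_true, and_true]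
    exact ⟨⟨a, by simp, mem_zpowers a⟩, ⟨a, by simp, inv_mem (mem_zpowers a)⟩,
      ⟨b, by simp, mem_zpowers b⟩, ⟨b, by simp, inv_mem (mem_zpowers b)⟩,
      ⟨c, by simp, mem_zpowers c⟩⟩
  have hpad : ∀ B : List G, (∀ g ∈ B, g ∈ [a, a⁻¹, b, b⁻¹, c]) →
      ∀ n, ∀ g ∈ B ++ cancellingPairs a n, ∃ t ∈ [a, b, c], g ∈ zpowers t := by
    intro B hB n g hg
    refine hpow g ?_
    rcases List.mem_append.mp hg with hg | hg
    · exact hB g hg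
    · rcases eq_or_eq_inv_of_mem_cancellingPairs hg with rfl | rfl <;> simp
  obtain ⟨n, rfl | rfl⟩ : ∃ n, r = 3 + 2 * n ∨ r = 4 + 2 * n := ⟨(r - 3) / 2, by omega⟩
  · exact ⟨_, by simp; omega, h.append_cancellingPairs ha n, hpad _ (by simp) n⟩
  · exact ⟨_, by simp; omega, h.quadruple_of_triple.append_cancellingPairs ha n,
      hpad _ (by simp) n⟩

end

theorem stmt_17_general {G : Type*} [Group G]
    (h : ∃ T₁ T₂ : List G, T₁.length = 3 ∧ T₂.length = 3 ∧
      IsRamificationStructure T₁ T₂)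
    (r₁ r₂ : ℕ) (h₁ : r₁ ≥ 3) (h₂ : r₂ ≥ 3) :
    ∃ T₁ T₂ : List G, T₁.length = r₁ ∧ T₂.length = r₂ ∧
      IsRamificationStructure T₁ T₂ := by
  obtain ⟨T₁, T₂, hl₁, hl₂, hT⟩ := h
  obtain ⟨a₁, b₁, c₁, rfl⟩ := List.length_eq_three.mp hl₁
  obtain ⟨a₂, b₂, c₂, rfl⟩ := List.length_eq_three.mp hl₂
  obtain ⟨S₁, hlen₁, hS₁, hpow₁⟩ := hT.1.exists_length_of_triple h₁
  obtain ⟨S₂, hlen₂, hS₂, hpow₂⟩ := hT.2.1.exists_length_of_triple h₂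
  exact ⟨S₁, S₂, hlen₁, hlen₂, hT.of_forall_mem_zpowers hS₁ hS₂
    (List.ne_nil_of_length_pos (by omega)) (List.ne_nil_of_length_pos (by omega)) hpow₁ hpow₂⟩

theorem stmt_17 {G : Type*} [Group G] [Finite G]
    (h : ∃ T₁ T₂ : List G, T₁.length = 3 ∧ T₂.length = 3 ∧
      IsRamificationStructure T₁ T₂)
    (r₁ r₂ : ℕ) (h₁ : r₁ ≥ 3) (h₂ : r₂ ≥ 3) :
    ∃ T₁ T₂ : List G, T₁.length = r₁ ∧ T₂.length = r₂ ∧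
      IsRamificationStructure T₁ T₂ :=
  stmt_17_general h r₁ r₂ h₁ h₂
end

section
/- Let G and G* be finite groups of coprime order. If G admits a ramification structure of size (r₁, r₂) and G* admits one of size (r₁*, r₂*), then G × G* admits a ramification structure of size (max{r₁, r₁*}, max{r₂, r₂*}). -/
/-!
Pad the shorter system of each group with identity entries and pair the two systems entrywise.
The entries of the paired system are nontrivial and multiply to `1`; it generates `G × G*` because
a subgroup projecting onto both factors contains `(a, 1)` as a `|G*|`-th power (the `|G*|`-th power
map of `G` being bijective) and likewise `(1, b)`. The projections of `Σ` of the paired system lie in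
`Σ` of the original systems together with `1`, so disjointness survives componentwise.
-/

open Subgroup

namespace Subgroup

variable {G G' : Type*} [Group G] [Group G']

lemma mk_one_mem_of_map_fst_eq_top (hcop : Nat.Coprime (Nat.card G) (Nat.card G'))
    {H : Subgroup (G × G')} (hH : H.map (MonoidHom.fst G G') = ⊤) (a : G) : (a, 1) ∈ H := by
  obtain ⟨b, rfl⟩ := hcop.pow_left_bijective.surjective a
  obtain ⟨p, hp, rfl⟩ : b ∈ H.map (MonoidHom.fst G G') := hH ▸ mem_top b
  have hpow : p ^ Nat.card G' = (p.1 ^ Nat.card G', 1) := Prod.ext rfl (pow_card_eq_one' ..)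
  exact hpow ▸ H.pow_mem hp _

lemma one_mk_mem_of_map_snd_eq_top (hcop : Nat.Coprime (Nat.card G) (Nat.card G'))
    {H : Subgroup (G × G')} (hH : H.map (MonoidHom.snd G G') = ⊤) (b : G') : (1, b) ∈ H := by
  obtain ⟨c, rfl⟩ := hcop.symm.pow_left_bijective.surjective b
  obtain ⟨p, hp, rfl⟩ : c ∈ H.map (MonoidHom.snd G G') := hH ▸ mem_top c
  have hpow : p ^ Nat.card G = (1, p.2 ^ Nat.card G) := Prod.ext (pow_card_eq_one' ..) rfl
  exact hpow ▸ H.pow_mem hp _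

lemma eq_top_of_map_fst_of_map_snd (hcop : Nat.Coprime (Nat.card G) (Nat.card G'))
    {H : Subgroup (G × G')} (hfst : H.map (MonoidHom.fst G G') = ⊤)
    (hsnd : H.map (MonoidHom.snd G G') = ⊤) : H = ⊤ := by
  refine eq_top_iff.2 fun ⟨a, b⟩ _ => ?_
  simpa using H.mul_mem (mk_one_mem_of_map_fst_eq_top hcop hfst a)
    (one_mk_mem_of_map_snd_eq_top hcop hsnd b)

lemma map_closure_list {K : Type*} [Group K] (f : G →* K) (T : List G) :
    (closure {g | g ∈ T}).map f = closure {k | k ∈ T.map f} := by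
  rw [MonoidHom.map_closure]
  congr 1
  ext
  simp

end Subgroup

section Padding

variable {G : Type*} [Group G]

lemma List.prod_rightpad_one (T : List G) (n : ℕ) : (T.rightpad n 1).prod = T.prod := by
  simp [List.rightpad]

lemma closure_rightpad_one (T : List G) (n : ℕ) :
    closure {g | g ∈ T.rightpad n 1} = closure {g | g ∈ T} := by
  refine le_antisymm (closure_le _ |>.2 fun g hg => ?_)
    (closure_mono fun g hg => List.mem_append_left _ hg)
  rcases List.mem_append.1 hg with hg | hg
  · exact subset_closure hg
  · exact List.eq_of_mem_replicate hg ▸ one_mem _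

lemma one_mem_sigmaSet_iff {T : List G} : 1 ∈ SigmaSet T ↔ T ≠ [] := by
  refine ⟨fun ⟨t, ht, _⟩ hT => by simp [hT] at ht, fun hT => ?_⟩
  obtain ⟨t, ht⟩ := List.exists_mem_of_ne_nil T hT
  exact ⟨t, ht, 1, 0, by simp⟩

lemma image_sigmaSet_subset {K : Type*} [Group K] (f : G →* K) (T : List G) :
    f '' SigmaSet T ⊆ SigmaSet (T.map f) := by
  rintro _ ⟨_, ⟨t, ht, c, k, rfl⟩, rfl⟩
  exact ⟨f t, List.mem_map_of_mem ht, f c, k, by simp⟩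

lemma sigmaSet_rightpad_one_subset (T : List G) (n : ℕ) :
    SigmaSet (T.rightpad n 1) ⊆ insert 1 (SigmaSet T) := by
  rintro _ ⟨t, ht, c, k, rfl⟩
  rcases List.mem_append.1 ht with ht | ht
  · exact Or.inr ⟨t, ht, c, k, rfl⟩
  · simp [List.eq_of_mem_replicate ht]

end Padding

-- `l.rightpad n a` has length `max n l.length`, so both padded lists have the common length
-- `max T.length T'.length`.
def zipPadOne {G G' : Type*} [One G] [One G'] (T : List G) (T' : List G') : List (G × G') :=
  (T.rightpad T'.length 1).zip (T'.rightpad T.length 1)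

section ZipPadOne

variable {G G' : Type*}

section One

variable [One G] [One G'] (T : List G) (T' : List G')

lemma length_zipPadOne : (zipPadOne T T').length = max T.length T'.length := by
  rw [zipPadOne, List.length_zip, List.length_rightpad, List.length_rightpad, max_comm, min_self]

lemma map_fst_zipPadOne : (zipPadOne T T').map Prod.fst = T.rightpad T'.length 1 :=
  List.map_fst_zip (by rw [List.length_rightpad, List.length_rightpad, max_comm])

lemma map_snd_zipPadOne : (zipPadOne T T').map Prod.snd = T'.rightpad T.length 1 :=
  List.map_snd_zip (by rw [List.length_rightpad, List.length_rightpad, max_comm])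

lemma fst_mem_or_snd_mem_of_mem_zipPadOne {T T'} {p : G × G'} (hp : p ∈ zipPadOne T T') :
    p.1 ∈ T ∨ p.2 ∈ T' := by
  unfold zipPadOne at hp
  obtain ⟨i, hi, rfl⟩ := List.mem_iff_getElem.1 hp
  have hi' : i < max T.length T'.length := hi.trans_le (length_zipPadOne T T').le
  rw [List.getElem_zip]
  by_cases hiT : i < T.length
  · exact Or.inl (List.getElem_append_left hiT ▸ List.getElem_mem hiT)
  · have hiT' : i < T'.length := by omega
    exact Or.inr (List.getElem_append_left hiT' ▸ List.getElem_mem hiT')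

end One

variable [Group G] [Group G'] {T : List G} {T' : List G'}

lemma prod_zipPadOne : (zipPadOne T T').prod = (T.prod, T'.prod) := by
  have h₁ := List.prod_hom (zipPadOne T T') (MonoidHom.fst G G')
  have h₂ := List.prod_hom (zipPadOne T T') (MonoidHom.snd G G')
  rw [MonoidHom.coe_fst, map_fst_zipPadOne, List.prod_rightpad_one] at h₁
  rw [MonoidHom.coe_snd, map_snd_zipPadOne, List.prod_rightpad_one] at h₂
  exact Prod.ext h₁.symm h₂.symm

lemma mem_sigmaSet_zipPadOne {x : G × G'} (hx : x ∈ SigmaSet (zipPadOne T T')) :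
    x.1 ∈ insert 1 (SigmaSet T) ∧ x.2 ∈ insert 1 (SigmaSet T') := by
  have h₁ := image_sigmaSet_subset (MonoidHom.fst G G') _ ⟨x, hx, rfl⟩
  have h₂ := image_sigmaSet_subset (MonoidHom.snd G G') _ ⟨x, hx, rfl⟩
  rw [MonoidHom.coe_fst, map_fst_zipPadOne] at h₁
  rw [MonoidHom.coe_snd, map_snd_zipPadOne] at h₂
  exact ⟨sigmaSet_rightpad_one_subset _ _ h₁, sigmaSet_rightpad_one_subset _ _ h₂⟩

lemma one_mem_sigmaSet_zipPadOne (hT : 1 ∈ SigmaSet T) : 1 ∈ SigmaSet (zipPadOne T T') := by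
  rw [one_mem_sigmaSet_iff, ← List.length_pos_iff, length_zipPadOne] at *
  exact lt_max_of_lt_left hT

lemma IsSpherical.zipPadOne (hcop : Nat.Coprime (Nat.card G) (Nat.card G'))
    (hT : IsSpherical T) (hT' : IsSpherical T') : IsSpherical (zipPadOne T T') := by
  refine ⟨fun p hp => ?_, ?_, by rw [prod_zipPadOne, hT.2.2, hT'.2.2, Prod.mk_one_one]⟩
  · rcases fst_mem_or_snd_mem_of_mem_zipPadOne hp with h | h
    · exact ne_of_apply_ne Prod.fst (hT.1 _ h)
    · exact ne_of_apply_ne Prod.snd (hT'.1 _ h)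
  · refine eq_top_of_map_fst_of_map_snd hcop ?_ ?_
    · rw [map_closure_list, MonoidHom.coe_fst, map_fst_zipPadOne, closure_rightpad_one, hT.2.1]
    · rw [map_closure_list, MonoidHom.coe_snd, map_snd_zipPadOne, closure_rightpad_one, hT'.2.1]

end ZipPadOne

lemma IsRamificationStructure.zipPadOne {G G' : Type*} [Group G] [Group G']
    (hcop : Nat.Coprime (Nat.card G) (Nat.card G')) {T₁ T₂ : List G} {T₁' T₂' : List G'}
    (h : IsRamificationStructure T₁ T₂) (h' : IsRamificationStructure T₁' T₂') :
    IsRamificationStructure (zipPadOne T₁ T₁') (zipPadOne T₂ T₂') := by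
  obtain ⟨hS₁, hS₂, hdisj⟩ := h
  obtain ⟨hS₁', hS₂', hdisj'⟩ := h'
  refine ⟨hS₁.zipPadOne hcop hS₁', hS₂.zipPadOne hcop hS₂', Set.Subset.antisymm ?_ ?_⟩
  · rintro x ⟨hx₁, hx₂⟩
    obtain ⟨h₁, h₁'⟩ := mem_sigmaSet_zipPadOne hx₁
    obtain ⟨h₂, h₂'⟩ := mem_sigmaSet_zipPadOne hx₂
    have hfst : x.1 ∈ insert 1 (SigmaSet T₁ ∩ SigmaSet T₂) :=
      Set.insert_inter_distrib .. ▸ ⟨h₁, h₂⟩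
    have hsnd : x.2 ∈ insert 1 (SigmaSet T₁' ∩ SigmaSet T₂') :=
      Set.insert_inter_distrib .. ▸ ⟨h₁', h₂'⟩
    rw [hdisj, Set.pair_eq_singleton] at hfst
    rw [hdisj', Set.pair_eq_singleton] at hsnd
    exact Prod.ext hfst hsnd
  · have h1 : (1 : G) ∈ SigmaSet T₁ ∩ SigmaSet T₂ := hdisj ▸ rfl
    exact Set.singleton_subset_iff.2
      ⟨one_mem_sigmaSet_zipPadOne h1.1, one_mem_sigmaSet_zipPadOne h1.2⟩

theorem stmt_18_general {G G' : Type*} [Group G] [Group G']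
    (hcop : Nat.Coprime (Nat.card G) (Nat.card G'))
    (r₁ r₂ r₁' r₂' : ℕ)
    (h : ∃ T₁ T₂ : List G, T₁.length = r₁ ∧ T₂.length = r₂ ∧
      IsRamificationStructure T₁ T₂)
    (h' : ∃ T₁ T₂ : List G', T₁.length = r₁' ∧ T₂.length = r₂' ∧
      IsRamificationStructure T₁ T₂) :
    ∃ A₁ A₂ : List (G × G'), A₁.length = max r₁ r₁' ∧ A₂.length = max r₂ r₂' ∧
      IsRamificationStructure A₁ A₂ := by
  obtain ⟨T₁, T₂, rfl, rfl, hT⟩ := h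
  obtain ⟨T₁', T₂', rfl, rfl, hT'⟩ := h'
  exact ⟨_, _, length_zipPadOne T₁ T₁', length_zipPadOne T₂ T₂', hT.zipPadOne hcop hT'⟩

theorem stmt_18 {G G' : Type*} [Group G] [Group G'] [Finite G] [Finite G']
    (hcop : Nat.Coprime (Nat.card G) (Nat.card G'))
    (r₁ r₂ r₁' r₂' : ℕ)
    (h : ∃ T₁ T₂ : List G, T₁.length = r₁ ∧ T₂.length = r₂ ∧
      IsRamificationStructure T₁ T₂)
    (h' : ∃ T₁ T₂ : List G', T₁.length = r₁' ∧ T₂.length = r₂' ∧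
      IsRamificationStructure T₁ T₂) :
    ∃ A₁ A₂ : List (G × G'), A₁.length = max r₁ r₁' ∧ A₂.length = max r₂ r₂' ∧
      IsRamificationStructure A₁ A₂ :=
  stmt_18_general hcop r₁ r₂ r₁' r₂' h h'
end
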